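/- For every family of functions y_0(u), y_2(v), y_4(w) affine over F2 and arbitrary Boolean functions y_1(u,v), y_3(v,w), y_5(u,w), the number of inputs (u,v,w) ∈ V = {(0,0,0),(0,1,1),(1,0,1),(1,1,0),(1,1,1)} on which all applicable win conditions of the game SS(C_6, I^{(5)}_{HLF}) hold is at most 4. -/
import Mathlib

lemma key_contra : ∀ a b c a' b' c' p q r : ZMod 2,
    ¬(a + b + c = 0 ∧ a' + b' + c + p = 1 ∧ a + b' + c' + q = 1 ∧
      a' + b + c' + r = 1 ∧ p + q + r = 0) := by decide

/-- For any depth-1 geometrically restricted classical strategy (affine `y₀, y₂, y₄` and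
arbitrary `y₁, y₃, y₅`), the number of inputs in
`V = {(0,0,0),(0,1,1),(1,0,1),(1,1,0),(1,1,1)}` on which all applicable win conditions
of the game `SS(C₆, I⁽⁵⁾_HLF)` hold is at most 4. -/
theorem restricted_HLF_at_most_four_wins
    (y₀ y₂ y₄ : ZMod 2 → ZMod 2) (y₁ y₃ y₅ : ZMod 2 → ZMod 2 → ZMod 2)
    (h₀ : ∃ α β : ZMod 2, ∀ u, y₀ u = α + β * u)
    (h₂ : ∃ α β : ZMod 2, ∀ v, y₂ v = α + β * v)
    (h₄ : ∃ α β : ZMod 2, ∀ w, y₄ w = α + β * w) :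
    Set.ncard {p : ZMod 2 × ZMod 2 × ZMod 2 |
        p ∈ ({(0,0,0), (0,1,1), (1,0,1), (1,1,0), (1,1,1)} :
          Set (ZMod 2 × ZMod 2 × ZMod 2)) ∧
        (p = (0,0,0) → y₀ 0 + y₂ 0 + y₄ 0 = 0) ∧
        (p = (1,1,0) → y₀ 1 + y₂ 1 + y₄ 0 + y₁ 1 1 = 1) ∧
        (p = (0,1,1) → y₀ 0 + y₂ 1 + y₄ 1 + y₃ 1 1 = 1) ∧
        (p = (1,0,1) → y₀ 1 + y₂ 0 + y₄ 1 + y₅ 1 1 = 1) ∧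
        (p = (1,1,1) → y₁ 1 1 + y₃ 1 1 + y₅ 1 1 = 0)} ≤ 4 := by
  set T : Set (ZMod 2 × ZMod 2 × ZMod 2) :=
    {(0,0,0), (0,1,1), (1,0,1), (1,1,0), (1,1,1)} with hT
  set S : Set (ZMod 2 × ZMod 2 × ZMod 2) :=
    {p | p ∈ T ∧
        (p = (0,0,0) → y₀ 0 + y₂ 0 + y₄ 0 = 0) ∧
        (p = (1,1,0) → y₀ 1 + y₂ 1 + y₄ 0 + y₁ 1 1 = 1) ∧
        (p = (0,1,1) → y₀ 0 + y₂ 1 + y₄ 1 + y₃ 1 1 = 1) ∧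
        (p = (1,0,1) → y₀ 1 + y₂ 0 + y₄ 1 + y₅ 1 1 = 1) ∧
        (p = (1,1,1) → y₁ 1 1 + y₃ 1 1 + y₅ 1 1 = 0)} with hS
  have hTfin : T.Finite := Set.toFinite T
  have hsub : S ⊆ T := fun p hp => hp.1
  have hTcard : T.ncard = 5 := by
    rw [hT, show ({(0,0,0), (0,1,1), (1,0,1), (1,1,0), (1,1,1)} :
        Set (ZMod 2 × ZMod 2 × ZMod 2)) =
        ↑({(0,0,0), (0,1,1), (1,0,1), (1,1,0), (1,1,1)} :
          Finset (ZMod 2 × ZMod 2 × ZMod 2)) by simp]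
    rw [Set.ncard_coe_finset]
    decide
  have hne : S ≠ T := by
    intro heq
    have m1 : ((0,0,0) : ZMod 2 × ZMod 2 × ZMod 2) ∈ S := heq ▸ (by simp [hT])
    have m2 : ((1,1,0) : ZMod 2 × ZMod 2 × ZMod 2) ∈ S := heq ▸ (by simp [hT])
    have m3 : ((0,1,1) : ZMod 2 × ZMod 2 × ZMod 2) ∈ S := heq ▸ (by simp [hT])
    have m4 : ((1,0,1) : ZMod 2 × ZMod 2 × ZMod 2) ∈ S := heq ▸ (by simp [hT])
    have m5 : ((1,1,1) : ZMod 2 × ZMod 2 × ZMod 2) ∈ S := heq ▸ (by simp [hT])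
    exact key_contra (y₀ 0) (y₂ 0) (y₄ 0) (y₀ 1) (y₂ 1) (y₄ 1)
      (y₁ 1 1) (y₃ 1 1) (y₅ 1 1)
      ⟨m1.2.1 rfl, m2.2.2.1 rfl, m3.2.2.2.1 rfl, m4.2.2.2.2.1 rfl, m5.2.2.2.2.2 rfl⟩
  have hlt : S.ncard < T.ncard := Set.ncard_lt_ncard ⟨hsub, fun h => hne (hsub.antisymm h)⟩ hTfin
  omega
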